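/- Let l, n₁, n₂ with gcd(n₁,n₂) ≥ 3 satisfy l, n₁, n₂ ≥ 1 and gcd(l, n₁) = gcd(l, n₂) = 1, and set d = gcd(n₁, n₂). Then the set of points of 𝔑^l_{n₁,n₂} fixed by every element of the cyclic subgroup of order d generated by the unit quaternion cos(2π/d) + i·sin(2π/d) (acting via the left action of the unit quaternions) is homeomorphic, as a subspace of 𝔑^l_{n₁,n₂}, to the disjoint union of two copies of the orbit space of 𝕊³ under the action of the group μ_l of l-th roots of unity given by ξ·(z₁,z₂) = (ξ^{n₁}z₁, ξ^{n₂}z₂), i.e., to two disjoint copies of the lens space 𝕊³/ℤ_l. -/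

import Mathlib

/-!
Write a quaternion as `p = α + jβ` with `α, β ∈ ℂ`. Left multiplication by a unit complex number
`c` multiplies the two components by `c` and `c̄`, right multiplication by `y` multiplies both
by `y`; so `c p y = p` with `c` non-real (here `c = e^{2πi/d}`, `d ≥ 3`) forces `α = 0` or
`β = 0`. Hence every orbit fixed by `ζ` meets `{1} × 𝕊³` or `{j} × 𝕊³`, and it meets that slice
in exactly one `μ_l`-orbit. Conversely the points of the two slices are fixed by `ζ`, because
`gcd(l, d) = 1` makes `ζ` the `l`-th power of some `x` with `x^{n₁} = x^{n₂} = 1`. The resulting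
continuous bijection from two compact lens spaces onto the fixed set is a homeomorphism since the
orbit space of the compact circle group is Hausdorff.
-/

noncomputable section

open Quaternion

/-- The embedding of `ℂ` into the quaternions, sending `a + b·i` to the quaternion `a + b·i`. -/
def cq (x : ℂ) : Quaternion ℝ := ⟨x.re, x.im, 0, 0⟩

/-- The total space `𝕊³_ℍ × 𝕊³`: pairs of a unit quaternion and a point `(z,w) ∈ ℂ²`
with `|z|² + |w|² = 1`. -/
abbrev TotalSpace : Type :=
  {a : Quaternion ℝ × (ℂ × ℂ) // ‖a.1‖ = 1 ∧ Complex.normSq a.2.1 + Complex.normSq a.2.2 = 1}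

/-- The circle action `x · (p,(z,w)) = (p x^l, (x^m z, x^n w))` on the ambient space. -/
def circleAct (l m n : ℕ) (x : Circle) (a : Quaternion ℝ × (ℂ × ℂ)) :
    Quaternion ℝ × (ℂ × ℂ) :=
  (a.1 * cq ((x : ℂ) ^ l), ((x : ℂ) ^ m * a.2.1, (x : ℂ) ^ n * a.2.2))

/-- The orbit relation of the circle action on `𝕊³_ℍ × 𝕊³`. -/
def NRel (l m n : ℕ) (a b : TotalSpace) : Prop :=
  ∃ x : Circle, circleAct l m n x a.1 = b.1

/-- The orbit space `𝔑^l_{m,n}`, with the quotient topology. -/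
abbrev NSpace (l m n : ℕ) : Type := Quot (NRel l m n)


/-- The left action of the group of unit quaternions on `𝔑^l_{m,n}`,
`g·[(p,(z,w))] = [(gp,(z,w))]`. -/
def quatAct (l m n : ℕ) (g : Metric.sphere (0 : Quaternion ℝ) 1) :
    NSpace l m n → NSpace l m n :=
  Quot.lift
    (fun a => Quot.mk _ ⟨((g : Quaternion ℝ) * a.1.1, a.1.2), by
      refine ⟨?_, a.2.2⟩
      have hg : ‖(g : Quaternion ℝ)‖ = 1 := mem_sphere_zero_iff_norm.mp g.2
      rw [norm_mul, hg, a.2.1, mul_one]⟩)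
    (by
      rintro ⟨⟨p, z, w⟩, hp, hzw⟩ ⟨⟨p', z', w'⟩, hp', hzw'⟩ ⟨x, hx⟩
      apply Quot.sound
      refine ⟨x, ?_⟩
      simp only [circleAct, Prod.mk.injEq] at hx ⊢
      exact ⟨by rw [mul_assoc, hx.1], hx.2⟩)


/-- The unit sphere `𝕊³ ⊂ ℂ²`: pairs `(z₁,z₂)` with `|z₁|² + |z₂|² = 1`. -/
abbrev SphereC2 : Type :=
  {zw : ℂ × ℂ // Complex.normSq zw.1 + Complex.normSq zw.2 = 1}

/-- The orbit relation of the action of the group `μ_l` of `l`-th roots of unity on `𝕊³`,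
`ξ·(z₁,z₂) = (ξ^{n₁}z₁, ξ^{n₂}z₂)`; its quotient is the lens space `𝕊³/ℤ_l`. -/
def lensRel (l n₁ n₂ : ℕ) (a b : SphereC2) : Prop :=
  ∃ ξ : ℂ, ξ ^ l = 1 ∧ (ξ ^ n₁ * a.1.1, ξ ^ n₂ * a.1.2) = b.1

/-- The lens space `𝕊³/ℤ_l` (with weights `n₁, n₂`), with the quotient topology. -/
abbrev LensSpace (l n₁ n₂ : ℕ) : Type := Quot (lensRel l n₁ n₂)

theorem properSMul_of_compactSpace {G X : Type*} [Group G] [MulAction G X] [TopologicalSpace G]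
    [TopologicalSpace X] [CompactSpace G] [T2Space X] [ContinuousSMul G X] : ProperSMul G X :=
  ⟨isProperMap_of_comp_of_t2 (by fun_prop) continuous_snd isProperMap_snd_of_compactSpace⟩

theorem exists_pow_eq_and_pow_eq_one_of_coprime {G : Type*} [Monoid G] {u : G} {d l : ℕ}
    (hu : u ^ d = 1) (hld : l.Coprime d) : ∃ x : G, x ^ l = u ∧ x ^ d = 1 := by
  obtain ⟨m, hm⟩ := exists_pow_eq_self_of_coprime
    (hld.coprime_dvd_right (orderOf_dvd_of_pow_eq_one hu))
  exact ⟨u ^ m, by rw [pow_right_comm, hm], by rw [pow_right_comm, hu, one_pow]⟩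

theorem Circle.exists_pow_eq {l : ℕ} (hl : l ≠ 0) (α : Circle) : ∃ x : Circle, x ^ l = α := by
  obtain ⟨t, rfl⟩ := Circle.exp_surjective α
  refine ⟨Circle.exp (t / l), ?_⟩
  rw [← Circle.exp_natCast_mul, mul_div_cancel₀ _ (by exact_mod_cast hl)]

theorem Circle.exists_coe_eq {α : ℂ} (h : ‖α‖ = 1) : ∃ u : Circle, (u : ℂ) = α :=
  ⟨⟨α, show α ∈ Metric.sphere (0 : ℂ) 1 from mem_sphere_zero_iff_norm.mpr h⟩, rfl⟩

theorem Circle.exp_two_pi_div_pow {d : ℕ} (hd : d ≠ 0) :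
    Circle.exp (2 * Real.pi / d) ^ d = 1 := by
  rw [← Circle.exp_natCast_mul, mul_div_cancel₀ _ (by exact_mod_cast hd), Circle.exp_two_pi]

theorem Circle.coe_exp_eq_mk (t : ℝ) : (Circle.exp t : ℂ) = ⟨Real.cos t, Real.sin t⟩ := by
  rw [Circle.coe_exp]
  exact Complex.ext (Complex.exp_ofReal_mul_I_re t) (Complex.exp_ofReal_mul_I_im t)

theorem Real.sin_two_pi_div_pos {d : ℕ} (hd : 2 < d) : 0 < Real.sin (2 * Real.pi / d) := by
  have hd' : (2 : ℝ) < d := by exact_mod_cast hd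
  refine Real.sin_pos_of_pos_of_lt_pi (by positivity) ?_
  rw [div_lt_iff₀ (by linarith)]
  nlinarith [Real.pi_pos]

section Quaternion

lemma cq_eq_coe (x : ℂ) : cq x = (x : ℍ) := rfl

lemma cq_mul (x y : ℂ) : cq (x * y) = cq x * cq y := Quaternion.coeComplex_mul x y

lemma cq_one : cq 1 = 1 := rfl

lemma cq_zero : cq 0 = 0 := rfl

lemma cq_injective : Function.Injective cq := fun _ _ h =>
  Complex.ext (congrArg QuaternionAlgebra.re h) (congrArg QuaternionAlgebra.imI h)

@[fun_prop]
lemma continuous_cq : Continuous cq :=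
  Quaternion.ofComplex.toLinearMap.continuous_of_finiteDimensional

lemma norm_cq (x : ℂ) : ‖cq x‖ = ‖x‖ := by
  rw [← sq_eq_sq₀ (norm_nonneg _) (norm_nonneg _), sq, ← Quaternion.normSq_eq_norm_mul_self,
    ← Complex.normSq_eq_norm_sq, Quaternion.normSq_def', Complex.normSq_apply]
  simp [cq, sq]

@[simps] def qj : ℍ := ⟨0, 0, 1, 0⟩

lemma norm_qj : ‖qj‖ = 1 := by
  rw [← pow_eq_one_iff_of_nonneg (norm_nonneg _) two_ne_zero, sq,
    ← Quaternion.normSq_eq_norm_mul_self, Quaternion.normSq_def']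
  simp [qj]

lemma cq_mul_qj (y : ℂ) : cq y * qj = qj * cq (starRingEnd ℂ y) := by
  ext <;> simp [cq_eq_coe]

-- `j` stands on the left so that both slices `q ∈ {1, j}` read `q * cq α`, the form on which
-- the circle acts by right multiplication.
lemma exists_eq_cq_add_qj_mul_cq (p : ℍ) : ∃ α β : ℂ, p = cq α + qj * cq β :=
  ⟨⟨p.re, p.imI⟩, ⟨p.imJ, -p.imK⟩, by ext <;> simp [cq_eq_coe]⟩

lemma cq_add_qj_mul_cq_inj {α β α' β' : ℂ} :
    cq α + qj * cq β = cq α' + qj * cq β' ↔ α = α' ∧ β = β' := by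
  refine ⟨fun h => ?_, fun h => by rw [h.1, h.2]⟩
  rw [Quaternion.ext_iff] at h
  simp [cq_eq_coe] at h
  exact ⟨Complex.ext h.1 h.2.1, Complex.ext h.2.2.1 h.2.2.2⟩

lemma cq_mul_cq_add_qj_mul_cq_mul_cq (c α β y : ℂ) :
    cq c * (cq α + qj * cq β) * cq y = cq (c * α * y) + qj * cq (starRingEnd ℂ c * β * y) := by
  simp only [mul_add, add_mul, cq_mul, ← mul_assoc, cq_mul_qj]

theorem eq_cq_or_eq_qj_mul_cq_of_cq_mul_mul_cq_eq {c y : ℂ} (hc : c.im ≠ 0) (hy : y ≠ 0) {p : ℍ}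
    (h : cq c * p * cq y = p) : (∃ α, p = cq α) ∨ ∃ β, p = qj * cq β := by
  obtain ⟨α, β, rfl⟩ := exists_eq_cq_add_qj_mul_cq p
  rw [cq_mul_cq_add_qj_mul_cq_mul_cq, cq_add_qj_mul_cq_inj] at h
  obtain ⟨hα, hβ⟩ := h
  by_cases hα0 : α = 0
  · exact Or.inr ⟨β, by rw [hα0, cq_zero, zero_add]⟩
  by_cases hβ0 : β = 0
  · exact Or.inl ⟨α, by rw [hβ0, cq_zero, mul_zero, add_zero]⟩
  have hcy : c * y = 1 := mul_left_cancel₀ hα0 (by linear_combination hα)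
  have hcy' : starRingEnd ℂ c * y = 1 := mul_left_cancel₀ hβ0 (by linear_combination hβ)
  exact absurd (Complex.conj_eq_iff_im.mp (mul_right_cancel₀ hy (hcy'.trans hcy.symm))) hc

end Quaternion

section OrbitSpace

variable {l m n : ℕ}

lemma circleAct_one (a : ℍ × (ℂ × ℂ)) : circleAct l m n 1 a = a := by
  simp [circleAct, cq_one]

lemma circleAct_mul (x y : Circle) (a : ℍ × (ℂ × ℂ)) :
    circleAct l m n (x * y) a = circleAct l m n x (circleAct l m n y a) := by
  simp only [circleAct, Circle.coe_mul, mul_pow, mul_assoc, ← cq_mul, mul_comm ((y : ℂ) ^ l)]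

-- Not an instance: the action depends on the weights `l m n`, which `TotalSpace` does not record.
variable (l m n) in
abbrev circleMulAction : MulAction Circle TotalSpace where
  smul x a := ⟨circleAct l m n x a.1, by
    obtain ⟨⟨p, z, w⟩, hp, hzw⟩ := a
    simpa [circleAct, norm_cq, hp, Circle.norm_coe] using hzw⟩
  one_smul a := Subtype.ext (circleAct_one a.1)
  mul_smul x y a := Subtype.ext (circleAct_mul x y a.1)

lemma nrel_eq_orbitRel :
    letI := circleMulAction l m n
    NRel l m n = (MulAction.orbitRel Circle TotalSpace).r := by
  let := circleMulAction l m n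
  ext a b
  refine ⟨fun ⟨x, hx⟩ => ⟨x⁻¹, inv_smul_eq_iff.mpr (Subtype.ext hx).symm⟩,
    fun ⟨x, hx⟩ => ⟨x⁻¹, congrArg Subtype.val (inv_smul_eq_iff.mpr hx.symm)⟩⟩

lemma nrel_equivalence : Equivalence (NRel l m n) := by
  let := circleMulAction l m n
  exact nrel_eq_orbitRel (l := l) (m := m) (n := n) ▸ (MulAction.orbitRel Circle TotalSpace).iseqv

lemma mk_eq_mk_iff {a b : TotalSpace} :
    Quot.mk (NRel l m n) a = Quot.mk (NRel l m n) b ↔ NRel l m n a b :=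
  nrel_equivalence.quot_mk_eq_iff a b

instance : T2Space (NSpace l m n) := by
  let := circleMulAction l m n
  have : ContinuousSMul Circle TotalSpace := ⟨by
    refine Continuous.subtype_mk ?_ _
    unfold circleAct
    fun_prop⟩
  have := properSMul_of_compactSpace (G := Circle) (X := TotalSpace)
  change T2Space (Quot (NRel l m n))
  rw [nrel_eq_orbitRel]
  exact t2Space_quotient_mulAction_of_properSMul

instance : MulAction (Metric.sphere (0 : ℍ) 1) (NSpace l m n) where
  smul := quatAct l m n
  one_smul := by
    rintro ⟨a⟩
    exact congrArg (Quot.mk _) (Subtype.ext (Prod.ext (one_mul a.1.1) rfl))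
  mul_smul g h := by
    rintro ⟨a⟩
    exact congrArg (Quot.mk _) (Subtype.ext (Prod.ext (mul_assoc (g : ℍ) h a.1.1) rfl))

lemma forall_mem_zpowers_quatAct_eq_iff {ζ : Metric.sphere (0 : ℍ) 1} {X : NSpace l m n} :
    (∀ g ∈ Subgroup.zpowers ζ, quatAct l m n g X = X) ↔ quatAct l m n ζ X = X :=
  Subgroup.zpowers_le (H := MulAction.stabilizer _ X)

end OrbitSpace

instance : CompactSpace SphereC2 := by
  refine isCompact_iff_compactSpace.mp (Metric.isCompact_of_isClosed_isBounded
    (isClosed_eq (by fun_prop) continuous_const)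
    ((Metric.isBounded_closedBall (x := 0) (r := 1)).subset ?_))
  rintro ⟨z, w⟩ (h : Complex.normSq z + Complex.normSq w = 1)
  have hz : ‖z‖ ^ 2 ≤ 1 := by
    rw [← Complex.normSq_eq_norm_sq]; linarith [Complex.normSq_nonneg w]
  have hw : ‖w‖ ^ 2 ≤ 1 := by
    rw [← Complex.normSq_eq_norm_sq]; linarith [Complex.normSq_nonneg z]
  simpa [Prod.norm_def] using ⟨(pow_le_one_iff_of_nonneg (norm_nonneg _) two_ne_zero).1 hz,
    (pow_le_one_iff_of_nonneg (norm_nonneg _) two_ne_zero).1 hw⟩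

section Slices

variable {l n₁ n₂ : ℕ}

def sliceIncl (q : Metric.sphere (0 : ℍ) 1) (a : SphereC2) : TotalSpace :=
  ⟨((q : ℍ), a.1), mem_sphere_zero_iff_norm.mp q.2, a.2⟩

def sphereJ : Metric.sphere (0 : ℍ) 1 := ⟨qj, mem_sphere_zero_iff_norm.mpr norm_qj⟩

lemma nrel_sliceIncl_iff (hl : l ≠ 0) (q : Metric.sphere (0 : ℍ) 1) {a b : SphereC2} :
    NRel l n₁ n₂ (sliceIncl q a) (sliceIncl q b) ↔ lensRel l n₁ n₂ a b := by
  constructor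
  · rintro ⟨x, hx⟩
    simp only [circleAct, sliceIncl, Prod.mk.injEq] at hx
    have hq : (q : ℍ) ≠ 0 := ne_zero_of_mem_unit_sphere q
    refine ⟨x, cq_injective (mul_left_cancel₀ hq (hx.1.trans (mul_one _).symm)), hx.2⟩
  · rintro ⟨ξ, hξ, h⟩
    obtain ⟨x, rfl⟩ := Circle.exists_coe_eq (Complex.norm_eq_one_of_pow_eq_one hξ hl)
    exact ⟨x, Prod.ext (show (q : ℍ) * cq ((x : ℂ) ^ l) = q by rw [hξ, cq_one, mul_one]) h⟩

def lensToNSpace (hl : l ≠ 0) (q : Metric.sphere (0 : ℍ) 1) :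
    LensSpace l n₁ n₂ → NSpace l n₁ n₂ :=
  Quot.lift (fun a => Quot.mk _ (sliceIncl q a)) fun _ _ h =>
    Quot.sound ((nrel_sliceIncl_iff hl q).mpr h)

lemma continuous_lensToNSpace (hl : l ≠ 0) (q : Metric.sphere (0 : ℍ) 1) :
    Continuous (lensToNSpace (n₁ := n₁) (n₂ := n₂) hl q) :=
  continuous_quot_lift _ (continuous_quot_mk.comp
    ((continuous_const.prodMk continuous_subtype_val).subtype_mk _))

lemma injective_lensToNSpace (hl : l ≠ 0) (q : Metric.sphere (0 : ℍ) 1) :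
    Function.Injective (lensToNSpace (n₁ := n₁) (n₂ := n₂) hl q) := by
  rintro ⟨a⟩ ⟨b⟩ h
  exact Quot.sound ((nrel_sliceIncl_iff hl q).mp (mk_eq_mk_iff.mp h))

lemma lensToNSpace_one_ne_sphereJ (hl : l ≠ 0) (X Y : LensSpace l n₁ n₂) :
    lensToNSpace hl 1 X ≠ lensToNSpace hl sphereJ Y := by
  induction X using Quot.ind
  induction Y using Quot.ind
  intro h
  obtain ⟨x, hx⟩ := mk_eq_mk_iff.mp h
  have := congrArg (fun a => a.1.imJ) hx
  simp [circleAct, sliceIncl, sphereJ, cq_eq_coe] at this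

lemma quatAct_lensToNSpace (hl : l ≠ 0) (g q : Metric.sphere (0 : ℍ) 1) (X : LensSpace l n₁ n₂) :
    quatAct l n₁ n₂ g (lensToNSpace hl q X) = lensToNSpace hl (g * q) X := by
  induction X using Quot.ind
  rfl

lemma lensToNSpace_eq_of_mul_cq_pow_eq (hl : l ≠ 0) {q q' : Metric.sphere (0 : ℍ) 1} {x : Circle}
    (hq : (q : ℍ) * cq ((x : ℂ) ^ l) = q') (h₁ : x ^ n₁ = 1) (h₂ : x ^ n₂ = 1) :
    lensToNSpace (n₁ := n₁) (n₂ := n₂) hl q = lensToNSpace hl q' := by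
  ext ⟨a⟩
  refine Quot.sound ⟨x, Prod.ext hq ?_⟩
  simp [circleAct, sliceIncl, ← Circle.coe_pow, h₁, h₂]

lemma mk_mem_range_lensToNSpace (hl : l ≠ 0) (q : Metric.sphere (0 : ℍ) 1) {a : TotalSpace}
    {α : ℂ} (hα : a.1.1 = q * cq α) :
    Quot.mk _ a ∈ Set.range (lensToNSpace (n₁ := n₁) (n₂ := n₂) hl q) := by
  obtain ⟨u, rfl⟩ : ∃ u : Circle, (u : ℂ) = α := Circle.exists_coe_eq <| by
    simpa [hα, norm_cq, mem_sphere_zero_iff_norm.mp q.2] using a.2.1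
  obtain ⟨x, hx⟩ := Circle.exists_pow_eq hl u⁻¹
  refine ⟨Quot.mk _ ⟨((x : ℂ) ^ n₁ * a.1.2.1, (x : ℂ) ^ n₂ * a.1.2.2), ?_⟩,
    (Quot.sound ⟨x, Prod.ext ?_ rfl⟩).symm⟩
  · simpa using a.2.2
  · change a.1.1 * cq ((x : ℂ) ^ l) = q
    rw [hα, mul_assoc, ← cq_mul, ← Circle.coe_pow, hx, ← Circle.coe_mul, mul_inv_cancel,
      Circle.coe_one, cq_one, mul_one]

end Slices

section TwoLensSpaces

variable {l n₁ n₂ : ℕ}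

def twoLensToNSpace (hl : l ≠ 0) : LensSpace l n₁ n₂ ⊕ LensSpace l n₁ n₂ → NSpace l n₁ n₂ :=
  Sum.elim (lensToNSpace hl 1) (lensToNSpace hl sphereJ)

lemma isClosedEmbedding_twoLensToNSpace (hl : l ≠ 0) :
    Topology.IsClosedEmbedding (twoLensToNSpace (n₁ := n₁) (n₂ := n₂) hl) :=
  ((continuous_lensToNSpace hl 1).sumElim (continuous_lensToNSpace hl sphereJ)).isClosedEmbedding
    ((injective_lensToNSpace hl 1).sumElim (injective_lensToNSpace hl sphereJ)
      (lensToNSpace_one_ne_sphereJ hl))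

theorem range_twoLensToNSpace (hl : l ≠ 0) {ζ : Metric.sphere (0 : ℍ) 1}
    {c : Circle} (hζ : (ζ : ℍ) = cq c) (hc : (c : ℂ).im ≠ 0) {x : Circle} (hx : x ^ l = c)
    (h₁ : x ^ n₁ = 1) (h₂ : x ^ n₂ = 1) :
    Set.range (twoLensToNSpace hl) =
      {X : NSpace l n₁ n₂ | quatAct l n₁ n₂ ζ X = X} := by
  ext X
  refine ⟨?_, fun hX => ?_⟩
  · rintro ⟨v | v, rfl⟩ <;>
      simp only [twoLensToNSpace, Sum.elim_inl, Sum.elim_inr, Set.mem_ofPred_eq,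
        quatAct_lensToNSpace]
    · refine congrFun (lensToNSpace_eq_of_mul_cq_pow_eq hl (x := x⁻¹) ?_
        (by rw [inv_pow, h₁, inv_one]) (by rw [inv_pow, h₂, inv_one])) v
      rw [Metric.unitSphere.coe_mul, Metric.unitSphere.coe_one, mul_one, hζ, ← Circle.coe_pow,
        inv_pow, hx, ← cq_mul, ← Circle.coe_mul, mul_inv_cancel, Circle.coe_one, cq_one]
    · refine congrFun (lensToNSpace_eq_of_mul_cq_pow_eq hl (x := x) ?_ h₁ h₂) v
      rw [Metric.unitSphere.coe_mul, hζ, ← Circle.coe_pow, hx]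
      change cq c * qj * cq c = qj
      rw [cq_mul_qj, mul_assoc, ← cq_mul, ← Circle.coe_inv_eq_conj, ← Circle.coe_mul,
        inv_mul_cancel, Circle.coe_one, cq_one, mul_one]
  · induction X using Quot.ind with | _ a =>
    obtain ⟨y, hy⟩ := mk_eq_mk_iff.mp hX
    have hfix : cq c * a.1.1 * cq ((y : ℂ) ^ l) = a.1.1 := hζ ▸ congrArg (fun b => b.1) hy
    rw [twoLensToNSpace, Set.Sum.elim_range]
    rcases eq_cq_or_eq_qj_mul_cq_of_cq_mul_mul_cq_eq hc (pow_ne_zero _ y.coe_ne_zero) hfix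
      with ⟨α, hα⟩ | ⟨β, hβ⟩
    · exact Or.inl (mk_mem_range_lensToNSpace hl 1 (hα.trans (one_mul _).symm))
    · exact Or.inr (mk_mem_range_lensToNSpace hl sphereJ hβ)

end TwoLensSpaces

theorem fixedSet_homeomorph_two_lensSpaces_general (l n₁ n₂ : ℕ)
    (hl : 0 < l) (hln₁ : Nat.gcd l n₁ = 1)
    (d : ℕ) (hd : d = Nat.gcd n₁ n₂) (hd3 : 3 ≤ d)
    (ζ : Metric.sphere (0 : Quaternion ℝ) 1)
    (hζ : (ζ : Quaternion ℝ) = cq ⟨Real.cos (2 * Real.pi / d), Real.sin (2 * Real.pi / d)⟩) :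
    Nonempty
      (↥{X : NSpace l n₁ n₂ | ∀ g ∈ Subgroup.zpowers ζ, quatAct l n₁ n₂ g X = X} ≃ₜ
        (LensSpace l n₁ n₂ ⊕ LensSpace l n₁ n₂)) := by
  have hdn₁ : d ∣ n₁ := hd ▸ Nat.gcd_dvd_left n₁ n₂
  have hdn₂ : d ∣ n₂ := hd ▸ Nat.gcd_dvd_right n₁ n₂
  obtain ⟨x, hx, hxd⟩ := exists_pow_eq_and_pow_eq_one_of_coprime
    (Circle.exp_two_pi_div_pow (by omega)) (Nat.Coprime.coprime_dvd_right hdn₁ hln₁)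
  have hx_pow : ∀ n, d ∣ n → x ^ n = 1 := by
    rintro _ ⟨k, rfl⟩
    rw [pow_mul, hxd, one_pow]
  have hc : (Circle.exp (2 * Real.pi / d) : ℂ).im ≠ 0 := by
    rw [Circle.coe_exp_eq_mk]
    exact (Real.sin_two_pi_div_pos (by omega)).ne'
  rw [Set.ext fun _ => forall_mem_zpowers_quatAct_eq_iff, ← range_twoLensToNSpace hl.ne'
    (hζ.trans (congrArg cq (Circle.coe_exp_eq_mk _).symm)) hc hx (hx_pow _ hdn₁) (hx_pow _ hdn₂)]
  exact ⟨(isClosedEmbedding_twoLensToNSpace hl.ne').isEmbedding.toHomeomorph.symm⟩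

/-- **The fixed point set of the principal isotropy group is two lens spaces.**
Let `l, n₁, n₂` be positive integers with `gcd(l,n₁) = gcd(l,n₂) = 1` and
`d = gcd(n₁,n₂) ≥ 3`, and let `ζ = cos(2π/d) + i·sin(2π/d)`, a unit quaternion.  Then the set
of points of `𝔑^l_{n₁,n₂}` fixed by every element of the cyclic subgroup of order `d`
generated by `ζ` (acting via the left action of the unit quaternions) is homeomorphic to the
disjoint union of two copies of the lens space `𝕊³/ℤ_l`, the orbit space of `𝕊³` under the
action `ξ·(z₁,z₂) = (ξ^{n₁}z₁, ξ^{n₂}z₂)` of the `l`-th roots of unity. -/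
theorem fixedSet_homeomorph_two_lensSpaces (l n₁ n₂ : ℕ)
    (hl : 0 < l) (hn₁ : 0 < n₁) (hn₂ : 0 < n₂)
    (hln₁ : Nat.gcd l n₁ = 1) (hln₂ : Nat.gcd l n₂ = 1)
    (d : ℕ) (hd : d = Nat.gcd n₁ n₂) (hd3 : 3 ≤ d)
    (ζ : Metric.sphere (0 : Quaternion ℝ) 1)
    (hζ : (ζ : Quaternion ℝ) = cq ⟨Real.cos (2 * Real.pi / d), Real.sin (2 * Real.pi / d)⟩) :
    Nonempty
      (↥{X : NSpace l n₁ n₂ | ∀ g ∈ Subgroup.zpowers ζ, quatAct l n₁ n₂ g X = X} ≃ₜ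
        (LensSpace l n₁ n₂ ⊕ LensSpace l n₁ n₂)) :=
  fixedSet_homeomorph_two_lensSpaces_general l n₁ n₂ hl hln₁ d hd hd3 ζ hζ
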